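/- Let 𝒬 be a probability distribution on real m×k matrices such that E_{Q∼𝒬}[Q Qᵀ] = I (the m×m identity) and such that the entries of Q Qᵀ Q Qᵀ are integrable, and let ω ≥ 0. Then the following are equivalent: (i) for every g ∈ ℝᵐ, E_{Q∼𝒬}[‖g − Q Qᵀ g‖²] ≤ ω‖g‖²; (ii) ‖E_{Q∼𝒬}[Q Qᵀ Q Qᵀ]‖ ≤ ω + 1, where ‖·‖ denotes the operator norm on m×m real matrices. -/

import Mathlib

/-!
Expanding the square and using `E[Q Qᵀ] = I` gives
`E ‖g - Q Qᵀ g‖² = ⟪g, M g⟫ - ‖g‖²` with `M = E[Q Qᵀ Q Qᵀ]`, so (i) says that the quadratic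
form of `M` is at most `(ω + 1) ‖g‖²`. As an average of the positive semidefinite matrices
`(Q Qᵀ)²`, `M` is positive semidefinite, and the operator norm of a positive operator is the
supremum of its Rayleigh quotient.
-/

open Matrix MeasureTheory

/-- The operator norm on `m × m` real matrices induced by the Euclidean norm. -/
noncomputable def opNorm {m : ℕ} (A : Matrix (Fin m) (Fin m) ℝ) : ℝ :=
  ‖Matrix.toEuclideanCLM (𝕜 := ℝ) (n := Fin m) A‖

open RCLike in
theorem ContinuousLinearMap.IsPositive.norm_le_iff {𝕜 E : Type*} [RCLike 𝕜]
    [NormedAddCommGroup E] [InnerProductSpace 𝕜 E] {T : E →L[𝕜] E} (hT : T.IsPositive)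
    {c : ℝ} (hc : 0 ≤ c) : ‖T‖ ≤ c ↔ ∀ x, re (inner 𝕜 (T x) x) ≤ c * ‖x‖ ^ 2 := by
  refine ⟨fun h x => ?_, fun h => ?_⟩
  · calc re (inner 𝕜 (T x) x) ≤ ‖T x‖ * ‖x‖ := re_inner_le_norm _ _
      _ ≤ ‖T‖ * ‖x‖ * ‖x‖ := by gcongr; exact T.le_opNorm x
      _ ≤ c * ‖x‖ ^ 2 := by rw [mul_assoc, ← sq]; gcongr
  · rw [T.norm_eq_iSup_rayleighQuotient hT.isSymmetric]
    refine ciSup_le fun x => ?_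
    rw [rayleighQuotient, reApplyInnerSelf_apply,
      abs_of_nonneg (div_nonneg (hT.re_inner_nonneg_left x) (by positivity))]
    exact div_le_of_le_mul₀ (by positivity) hc (h x)

theorem Matrix.IsSymm.abs_apply_le {R n : Type*} [Field R] [LinearOrder R] [IsStrictOrderedRing R]
    [Fintype n] {A : Matrix n n R} (hA : A.IsSymm) (i j : n) :
    |A i j| ≤ (1 + (A * A) i i) / 2 := by
  have hsq : A i j ^ 2 ≤ (A * A) i i := by
    rw [mul_apply]
    calc A i j ^ 2 = A i j * A j i := by rw [hA.apply i j, sq]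
      _ ≤ ∑ l, A i l * A l i := Finset.single_le_sum (f := fun l => A i l * A l i)
          (fun l _ => by rw [hA.apply i l]; exact mul_self_nonneg _) (Finset.mem_univ j)
  nlinarith [sq_nonneg (|A i j| - 1), sq_abs (A i j)]

section EntrywiseIntegral

variable {α m n : Type*} [MeasurableSpace α] {μ : Measure α} [Fintype n]

/-- The expectation of a random matrix. An entry that is not integrable gets the junk value `0`. -/
noncomputable def entrywiseIntegral (μ : Measure α) (A : α → Matrix m n ℝ) : Matrix m n ℝ :=
  Matrix.of fun i j => ∫ a, A a i j ∂μ

theorem integrable_apply_of_isSymm [IsFiniteMeasure μ] {A : α → Matrix n n ℝ}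
    (hA : ∀ a, (A a).IsSymm) {i j : n} (hmeas : AEStronglyMeasurable (fun a => A a i j) μ)
    (hint : Integrable (fun a => (A a * A a) i i) μ) : Integrable (fun a => A a i j) μ :=
  (((integrable_const 1).add hint).div_const 2).mono' hmeas
    (.of_forall fun a => (hA a).abs_apply_le i j)

variable [Fintype m]

theorem integrable_dotProduct_mulVec {A : α → Matrix m n ℝ}
    (hA : ∀ i j, Integrable (fun a => A a i j) μ) (x : m → ℝ) (y : n → ℝ) :
    Integrable (fun a => x ⬝ᵥ (A a *ᵥ y)) μ := by
  simp only [dotProduct, mulVec, Finset.mul_sum]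
  exact integrable_finsetSum _ fun i _ => integrable_finsetSum _ fun j _ =>
    ((hA i j).mul_const (y j)).const_mul (x i)

theorem integral_dotProduct_mulVec {A : α → Matrix m n ℝ}
    (hA : ∀ i j, Integrable (fun a => A a i j) μ) (x : m → ℝ) (y : n → ℝ) :
    ∫ a, x ⬝ᵥ (A a *ᵥ y) ∂μ = x ⬝ᵥ (entrywiseIntegral μ A *ᵥ y) := by
  have hterm (i j) : Integrable (fun a => x i * (A a i j * y j)) μ :=
    ((hA i j).mul_const (y j)).const_mul (x i)
  simp only [dotProduct, mulVec, Finset.mul_sum, entrywiseIntegral, of_apply]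
  rw [integral_finsetSum _ fun i _ => integrable_finsetSum _ fun j _ => hterm i j]
  refine Finset.sum_congr rfl fun i _ => ?_
  rw [integral_finsetSum _ fun j _ => hterm i j]
  simp only [integral_const_mul, integral_mul_const]

theorem Matrix.PosSemidef.entrywiseIntegral {A : α → Matrix n n ℝ}
    (hA : ∀ a, (A a).PosSemidef) (hint : ∀ i j, Integrable (fun a => A a i j) μ) :
    (entrywiseIntegral μ A).PosSemidef := by
  rw [posSemidef_iff_dotProduct_mulVec]
  refine ⟨?_, fun x => ?_⟩
  · ext i j
    simp only [conjTranspose_apply, star_trivial, _root_.entrywiseIntegral, of_apply]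
    exact integral_congr_ae (.of_forall fun a => (hA a).1.apply i j)
  · rw [star_trivial, ← integral_dotProduct_mulVec hint]
    exact integral_nonneg fun a => by simpa using (hA a).dotProduct_mulVec_nonneg x

end EntrywiseIntegral

open scoped RealInnerProductSpace

theorem EuclideanSpace.dotProduct_self_eq_norm_sq {n : Type*} [Fintype n]
    (x : EuclideanSpace ℝ n) : x ⬝ᵥ x = ‖x‖ ^ 2 := by
  rw [← real_inner_self_eq_norm_sq, EuclideanSpace.inner_eq_star_dotProduct, star_trivial]

section EuclideanQuadraticForms

variable {n : Type*} [Fintype n] [DecidableEq n]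

open scoped ComplexOrder in
theorem Matrix.PosSemidef.isPositive_toEuclideanCLM {𝕜 : Type*} [RCLike 𝕜] {A : Matrix n n 𝕜}
    (hA : A.PosSemidef) : (toEuclideanCLM (𝕜 := 𝕜) (n := n) A).IsPositive := by
  rw [← ContinuousLinearMap.isPositive_toLinearMap_iff, coe_toEuclideanCLM_eq_toEuclideanLin]
  exact isPositive_toEuclideanLin_iff.2 hA

theorem norm_toEuclideanCLM_apply_sq (A : Matrix n n ℝ) (x : EuclideanSpace ℝ n) :
    ‖toEuclideanCLM (𝕜 := ℝ) A x‖ ^ 2 = x ⬝ᵥ (Aᵀ * A) *ᵥ x := by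
  rw [← inner_toEuclideanCLM, ← conjTranspose_eq_transpose_of_trivial, ← star_eq_conjTranspose,
    map_mul, map_star, ContinuousLinearMap.star_eq_adjoint, mul_apply_eq_comp,
    ContinuousLinearMap.adjoint_inner_right, real_inner_self_eq_norm_sq]

theorem norm_sub_toEuclideanLin_apply_sq {A : Matrix n n ℝ} (hA : A.IsSymm)
    (x : EuclideanSpace ℝ n) :
    ‖x - toEuclideanLin A x‖ ^ 2 = ‖x‖ ^ 2 - 2 * (x ⬝ᵥ A *ᵥ x) + x ⬝ᵥ (A * A) *ᵥ x := by
  rw [← coe_toEuclideanCLM_eq_toEuclideanLin, ContinuousLinearMap.coe_coe, norm_sub_sq_real,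
    inner_toEuclideanCLM, norm_toEuclideanCLM_apply_sq, hA.eq]

theorem integral_norm_sub_toEuclideanLin_apply_sq {α : Type*} [MeasurableSpace α]
    {μ : Measure α} [IsProbabilityMeasure μ] {A : α → Matrix n n ℝ} (hA : ∀ a, (A a).IsSymm)
    (hint : ∀ i j, Integrable (fun a => A a i j) μ)
    (hint₂ : ∀ i j, Integrable (fun a => (A a * A a) i j) μ) (hmean : entrywiseIntegral μ A = 1)
    (x : EuclideanSpace ℝ n) :
    ∫ a, ‖x - toEuclideanLin (A a) x‖ ^ 2 ∂μ =
      x ⬝ᵥ entrywiseIntegral μ (fun a => A a * A a) *ᵥ x - ‖x‖ ^ 2 := by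
  have h₁ := (integrable_dotProduct_mulVec hint x x).const_mul 2
  have h₀ : Integrable (fun a => ‖x‖ ^ 2 - 2 * (x ⬝ᵥ A a *ᵥ x)) μ := (integrable_const _).sub h₁
  simp_rw [norm_sub_toEuclideanLin_apply_sq (hA _)]
  rw [integral_add h₀ (integrable_dotProduct_mulVec hint₂ x x),
    integral_sub (integrable_const _) h₁, integral_const, probReal_univ, one_smul,
    integral_const_mul, integral_dotProduct_mulVec hint, integral_dotProduct_mulVec hint₂, hmean,
    one_mulVec, EuclideanSpace.dotProduct_self_eq_norm_sq]
  ring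

end EuclideanQuadraticForms

theorem omega_unbiased_iff_Q_norm (m k : ℕ) (ω : ℝ) (hω : 0 ≤ ω)
    (𝒬 : Measure (Fin m → Fin k → ℝ)) [IsProbabilityMeasure 𝒬]
    (hI : (Matrix.of fun i j => ∫ Q, ((Matrix.of Q) * (Matrix.of Q)ᵀ) i j ∂𝒬) =
      (1 : Matrix (Fin m) (Fin m) ℝ))
    (hint : ∀ i j, Integrable
      (fun Q => ((Matrix.of Q) * (Matrix.of Q)ᵀ * ((Matrix.of Q) * (Matrix.of Q)ᵀ)) i j) 𝒬) :
    (∀ g : EuclideanSpace ℝ (Fin m),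
        ∫ Q, ‖g - Matrix.toEuclideanLin ((Matrix.of Q) * (Matrix.of Q)ᵀ) g‖ ^ 2 ∂𝒬 ≤
          ω * ‖g‖ ^ 2) ↔
      opNorm (Matrix.of fun i j =>
          ∫ Q, ((Matrix.of Q) * (Matrix.of Q)ᵀ * ((Matrix.of Q) * (Matrix.of Q)ᵀ)) i j ∂𝒬) ≤
        ω + 1 := by
  have hsymm (Q : Fin m → Fin k → ℝ) : (of Q * (of Q)ᵀ).IsSymm := by
    simp [IsSymm, transpose_mul]
  have hint₁ (i j : Fin m) : Integrable (fun Q => (of Q * (of Q)ᵀ) i j) 𝒬 :=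
    integrable_apply_of_isSymm hsymm (by fun_prop : Continuous _).aestronglyMeasurable (hint i i)
  have hpsd (Q : Fin m → Fin k → ℝ) : (of Q * (of Q)ᵀ * (of Q * (of Q)ᵀ)).PosSemidef := by
    simpa only [conjTranspose_eq_transpose_of_trivial, (hsymm Q).eq] using
      posSemidef_conjTranspose_mul_self (of Q * (of Q)ᵀ)
  have hpos := (PosSemidef.entrywiseIntegral hpsd hint).isPositive_toEuclideanCLM
  refine (forall_congr' fun g => ?_).trans (hpos.norm_le_iff (by linarith)).symm
  rw [integral_norm_sub_toEuclideanLin_apply_sq hsymm hint₁ hint hI, RCLike.re_to_real,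
    real_inner_comm, inner_toEuclideanCLM]
  constructor <;> intro h <;> linarith
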